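/- arXiv:2505.07111 — 2 statements merged into one kernel-verified Lean document; each statement's English description precedes it below -/
import Mathlib

section
/- Let Σ be an alphabet, T a tree over Σ, and w ∈ [T] an infinite branch of T. Then T decomposes along the branch w as T = Pref(w) ∪ ⋃_{u ∈ w°} u(u⁻¹T), where Pref(w) and the sets u(u⁻¹T) for u ranging over the off-words of w are pairwise disjoint. -/
/-- The prefix of length `n` of an infinite word `w : ℕ → A`. -/
def pre {A : Type*} (w : ℕ → A) (n : ℕ) : List A := List.ofFn (fun i : Fin n => w i)

/-- A tree over `A`: a set of finite words closed under taking prefixes. -/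
def IsTree {A : Type*} (T : Set (List A)) : Prop := ∀ u ∈ T, ∀ v, v <+: u → v ∈ T

/-- The set of infinite branches of a set `T` of finite words. -/
def branches {A : Type*} (T : Set (List A)) : Set (ℕ → A) := {w | ∀ n, pre w n ∈ T}

/-- Prepend a finite word to an infinite word. -/
def cat {A : Type*} (u : List A) (w : ℕ → A) : ℕ → A :=
  fun n => if h : n < u.length then u.get ⟨n, h⟩ else w (n - u.length)

/-- The set of off-words of an infinite word `w`:
words `(w|n) ⧺ [a]` with `a ≠ w(n)`. -/
def offWords {A : Type*} (w : ℕ → A) : Set (List A) :=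
  {u | ∃ n : ℕ, ∃ a : A, a ≠ w n ∧ u = pre w n ++ [a]}

lemma pre_length {A : Type*} (w : ℕ → A) (n : ℕ) : (pre w n).length = n := by
  simp [pre]

lemma pre_getElem? {A : Type*} (w : ℕ → A) {i n : ℕ} (h : i < n) :
    (pre w n)[i]? = some (w i) := by
  simp [pre, List.getElem?_eq_some_iff, h]

lemma key_getElem? {A : Type*} (w : ℕ → A) (n : ℕ) (a : A) (v : List A) :
    ((pre w n ++ [a]) ++ v)[n]? = some a := by
  rw [List.append_assoc, List.getElem?_append_right (by simp [pre_length])]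
  simp [pre_length]

lemma key_getElem?' {A : Type*} (w : ℕ → A) {n m : ℕ} (h : n < m) (a : A) (v : List A) :
    ((pre w m ++ [a]) ++ v)[n]? = some (w n) := by
  rw [List.getElem?_append, if_pos (by simp [pre_length]; omega),
      List.getElem?_append, if_pos (by simp [pre_length, h]), pre_getElem? w h]


/-- a tree decomposes along any infinite branch `w` as
`T = Pref(w) ∪ ⋃_{u ∈ w°} u(u⁻¹T)`, the pieces being pairwise disjoint. -/
theorem tree_branch_decomposition {A : Type*} (T : Set (List A)) (hT : IsTree T)
    (w : ℕ → A) (hw : w ∈ branches T) :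
    (T = Set.range (pre w) ∪ ⋃ u ∈ offWords w, (fun v => u ++ v) '' {v | u ++ v ∈ T}) ∧
      (∀ u ∈ offWords w,
        Disjoint (Set.range (pre w)) ((fun v => u ++ v) '' {v | u ++ v ∈ T})) ∧
      ∀ u ∈ offWords w, ∀ u' ∈ offWords w, u ≠ u' →
        Disjoint ((fun v => u ++ v) '' {v | u ++ v ∈ T})
          ((fun v => u' ++ v) '' {v | u' ++ v ∈ T}) := by
  refine ⟨?_, ?_, ?_⟩
  · ext x
    constructor
    · intro hx
      by_cases h : ∀ i, (hi : i < x.length) → x[i] = w i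
      · left
        refine ⟨x.length, ?_⟩
        apply List.ext_getElem (by simp [pre_length])
        intro i hi hi'
        simp only [pre, List.getElem_ofFn]
        exact (h i hi').symm
      · push_neg at h
        right
        have hEx : ∃ i, ∃ (hi : i < x.length), x[i] ≠ w i := h
        classical
        let P : ℕ → Prop := fun i => i < x.length ∧ x[i]? ≠ some (w i)
        have hP : ∃ i, P i := by
          obtain ⟨i, hi, hne⟩ := hEx
          exact ⟨i, hi, by simp [List.getElem?_eq_some_iff, hi]; exact hne⟩
        let n := Nat.find hP
        obtain ⟨hn, hne⟩ : P n := Nat.find_spec hP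
        have hmin : ∀ i < n, x[i]? = some (w i) := by
          intro i hi
          have := Nat.find_min hP hi
          simp only [P, not_and, not_not] at this
          exact this (lt_trans hi hn)
        have ha : x[n] ≠ w n := by
          intro hc; exact hne (by simp [List.getElem?_eq_some_iff, hn, hc])
        refine Set.mem_biUnion (show pre w n ++ [x[n]] ∈ offWords w from ⟨n, x[n], ha, rfl⟩) ?_
        have hx' : (pre w n ++ [x[n]]) ++ x.drop (n + 1) = x := by
          have h1 : pre w n = x.take n := by
            apply List.ext_getElem (by simp [pre_length, le_of_lt hn])
            intro i hi hi'
            have hi2 : i < n := by simpa [pre_length] using hi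
            have := hmin i hi2
            simp only [pre, List.getElem_ofFn]
            have : x[i] = w i := by
              have hix : i < x.length := lt_trans hi2 hn
              simpa [List.getElem?_eq_some_iff, hix] using hmin i hi2
            simp [this]
          have h2 : x.take (n + 1) = x.take n ++ [x[n]] := by
            rw [List.take_succ]; simp [List.getElem?_eq_getElem hn]
          rw [h1, ← h2, List.take_append_drop]
        exact ⟨x.drop (n + 1), by rw [Set.mem_setOf_eq, hx']; exact hx, hx'⟩
    · rintro (⟨n, rfl⟩ | hx)
      · exact hw n
      · simp only [Set.mem_iUnion, Set.mem_image, Set.mem_setOf_eq] at hx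
        obtain ⟨u, _, v, hv, rfl⟩ := hx
        exact hv
  · rintro u ⟨n, a, ha, rfl⟩
    rw [Set.disjoint_left]
    rintro x ⟨m, rfl⟩ ⟨v, _, hv⟩
    dsimp only at hv
    have h1 : (pre w m)[n]? = some a := by rw [← hv]; exact key_getElem? w n a v
    have h2 : n < m := by
      by_contra h
      rw [List.getElem?_eq_none (by simp [pre_length]; omega)] at h1
      exact Option.some_ne_none a h1.symm
    rw [pre_getElem? w h2] at h1
    exact ha (Option.some.injEq _ _ ▸ h1.symm) |>.elim
  · rintro u ⟨n, a, ha, rfl⟩ u' ⟨m, b, hb, rfl⟩ hne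
    rw [Set.disjoint_left]
    rintro x ⟨v, _, hv⟩ ⟨v', _, hv'⟩
    dsimp only at hv hv'
    rcases lt_trichotomy n m with h | h | h
    · have h1 := key_getElem? w n a v
      have h2 := key_getElem?' w h b v'
      rw [hv] at h1; rw [hv'] at h2
      rw [h1] at h2
      exact ha (Option.some.inj h2)
    · subst h
      have h1 := key_getElem? w n a v
      have h2 := key_getElem? w n b v'
      rw [hv] at h1; rw [hv'] at h2
      rw [h1] at h2
      exact hne (by rw [Option.some.inj h2])
    · have h1 := key_getElem?' w h a v
      have h2 := key_getElem? w m b v'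
      rw [hv] at h1; rw [hv'] at h2
      rw [h1] at h2
      exact hb (Option.some.inj h2).symm
end

section
/- Let Σ be an alphabet, w an infinite word over Σ, and (T_n)_{n∈ℕ} a family of nonempty trees over Σ. Then T = ⋃_{n∈ℕ} (w|n)T_n is a tree over Σ, and its set of infinite branches is [T] = {w} ∪ ⋃_{n∈ℕ} (w|n)[T_n]. -/
lemma pre_add {A : Type*} (w : ℕ → A) (m k : ℕ) :
    pre w (m + k) = pre w m ++ pre (fun i => w (m + i)) k := by
  rw [pre, List.ofFn_add]; congr 1

lemma pre_getElem {A : Type*} (w : ℕ → A) (n i : ℕ) (h : i < n) :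
    (pre w n)[i]'(by simp [pre_length, h]) = w i := by
  simp [pre]

lemma pre_take {A : Type*} (w : ℕ → A) (m n : ℕ) (h : m ≤ n) :
    (pre w n).take m = pre w m := by
  obtain ⟨k, rfl⟩ := Nat.exists_eq_add_of_le h
  rw [pre_add, List.take_append_of_le_length (by simp [pre_length]),
    List.take_of_length_le (by simp [pre_length])]

lemma pre_take_all {A : Type*} (w : ℕ → A) {m n : ℕ} (h : n ≤ m) :
    (pre w n).take m = pre w n :=
  List.take_of_length_le (by rw [pre_length]; omega)

lemma pre_congr {A : Type*} {x y : ℕ → A} {n : ℕ} (h : ∀ i < n, x i = y i) :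
    pre x n = pre y n := by
  unfold pre; congr 1; funext i; exact h i i.isLt

lemma eq_of_pre_eq {A : Type*} {x y : ℕ → A} {n i : ℕ} (h : pre x n = pre y n) (hi : i < n) :
    x i = y i := by
  rw [← pre_getElem x n i hi, ← pre_getElem y n i hi]; simp only [h]

lemma pre_cat {A : Type*} (u : List A) (y : ℕ → A) (m : ℕ) :
    pre (cat u y) (u.length + m) = u ++ pre y m := by
  rw [pre_add]
  congr 1
  · apply List.ext_getElem (by simp [pre_length])
    intro i h1 h2
    rw [pre_getElem _ _ _ (by simpa [pre_length] using h1)]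
    simp [cat, h2]
  · apply pre_congr
    intro i _
    simp [cat]

/-- for nonempty trees `(T_n)` and an infinite word `w`,
`T = ⋃ n, (w|n)T_n` is a tree with `[T] = {w} ∪ ⋃ n, (w|n)[T_n]`. -/
theorem branch_construction {A : Type*} (w : ℕ → A) (Tn : ℕ → Set (List A))
    (hTn : ∀ n, IsTree (Tn n)) (hne : ∀ n, (Tn n).Nonempty) :
    IsTree (⋃ n : ℕ, (fun v => pre w n ++ v) '' Tn n) ∧
      branches (⋃ n : ℕ, (fun v => pre w n ++ v) '' Tn n) =
        {w} ∪ ⋃ n : ℕ, cat (pre w n) '' branches (Tn n) := by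
  classical
  have hnil : ∀ n, ([] : List A) ∈ Tn n := fun n => by
    obtain ⟨u, hu⟩ := hne n
    exact hTn n u hu [] (List.nil_prefix)
  set T := ⋃ n : ℕ, (fun v => pre w n ++ v) '' Tn n with hT
  have memT : ∀ {u : List A}, u ∈ T ↔ ∃ n, ∃ t ∈ Tn n, pre w n ++ t = u := by
    intro u; simp [hT, Set.mem_iUnion, Set.mem_image]
  -- downward closure helper
  have down : ∀ (x : ℕ → A) (j m M : ℕ), j + m ≤ M →
      (∃ t ∈ Tn j, pre w j ++ t = pre x M) → ∃ t ∈ Tn j, pre w j ++ t = pre x (j + m) := by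
    intro x j m M hle ⟨t, ht, heq⟩
    refine ⟨t.take m, hTn j t ht _ (List.take_prefix m t), ?_⟩
    have h1 : pre x (j + m) = (pre x M).take (j + m) := (pre_take x (j + m) M hle).symm
    rw [h1, ← heq, List.take_append, pre_length,
      pre_take_all w (by omega), Nat.add_sub_cancel_left]
  have tree : IsTree T := by
    intro u hu v hv
    obtain ⟨n, t, ht, rfl⟩ := memT.mp hu
    have hveq : v = (pre w n ++ t).take v.length := List.prefix_iff_eq_take.mp hv
    rcases le_or_gt v.length n with h | h
    · refine memT.mpr ⟨v.length, [], hnil _, ?_⟩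
      conv_rhs => rw [hveq]
      rw [List.append_nil, List.take_append_of_le_length (by rw [pre_length]; exact h),
        pre_take w _ _ h]
    · refine memT.mpr ⟨n, t.take (v.length - n), hTn n t ht _ (List.take_prefix _ t), ?_⟩
      conv_rhs => rw [hveq]
      rw [List.take_append, pre_length,
        pre_take_all w (by omega)]
  refine ⟨tree, ?_⟩
  ext x
  constructor
  · intro hx
    by_cases hxw : x = w
    · exact Or.inl hxw
    · right
      have hex : ∃ n, x n ≠ w n := by
        by_contra hc; push_neg at hc; exact hxw (funext hc)
      set n := Nat.find hex with hn
      have hxn : x n ≠ w n := Nat.find_spec hex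
      have hagree : ∀ i < n, x i = w i := fun i hi => by
        by_contra hc; exact Nat.find_min hex hi hc
      -- every decomposition of pre x M for M ≥ n+1 has index ≤ n
      have hidx : ∀ M ≥ n + 1, ∀ j, (∃ t ∈ Tn j, pre w j ++ t = pre x M) → j ≤ n := by
        intro M hM j ⟨t, _, heq⟩
        by_contra hc
        push_neg at hc
        have hjM : j ≤ M := by
          have := congrArg List.length heq
          simp [pre_length] at this; omega
        have : pre x j = pre w j := by
          rw [← pre_take x j M hjM, ← heq, List.take_append_of_le_length (by rw [pre_length]),
            pre_take w j j le_rfl]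
        exact hxn (eq_of_pre_eq this (by omega))
      -- pigeonhole: some j ≤ n works for all m
      have key : ∃ j ≤ n, ∀ m, ∃ t ∈ Tn j, pre w j ++ t = pre x (j + m) := by
        by_contra hc
        push_neg at hc
        have hc2 : ∀ j, ∃ m, j ≤ n → ∀ t ∈ Tn j, pre w j ++ t ≠ pre x (j + m) := by
          intro j
          by_cases hj : j ≤ n
          · obtain ⟨m, hm⟩ := hc j hj; exact ⟨m, fun _ => hm⟩
          · exact ⟨0, fun h => absurd h hj⟩
        choose f hf using hc2
        set M := n + 1 + (Finset.range (n + 1)).sup (fun j => j + f j) with hM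
        obtain ⟨j, t, ht, heq⟩ := memT.mp (hx M)
        have hjn : j ≤ n := hidx M (by omega) j ⟨t, ht, heq⟩
        have hle : j + f j ≤ M := by
          have : j + f j ≤ (Finset.range (n + 1)).sup (fun j => j + f j) :=
            Finset.le_sup (f := fun j => j + f j) (Finset.mem_range.mpr (by omega))
          omega
        obtain ⟨t2, ht2, heq2⟩ := down x j (f j) M hle ⟨t, ht, heq⟩
        exact hf j hjn t2 ht2 heq2
      obtain ⟨j, hjn, hkey⟩ := key
      rw [Set.mem_iUnion]
      refine ⟨j, ?_⟩
      rw [Set.mem_image]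
      refine ⟨fun i => x (j + i), ?_, ?_⟩
      · intro m
        obtain ⟨t, ht, heq⟩ := hkey m
        have h2 : pre x (j + m) = pre x j ++ pre (fun i => x (j + i)) m := pre_add x j m
        have h3 : pre x j = pre w j := pre_congr (fun i hi => hagree i (by omega))
        rw [h2, h3] at heq
        have h4 := List.append_cancel_left heq
        exact h4 ▸ ht
      · funext i
        simp only [cat, pre_length]
        split_ifs with h
        · rw [List.get_eq_getElem, pre_getElem w j i h]
          exact (hagree i (by omega)).symm
        · congr 1; omega
  · rintro (rfl | hx)
    · intro m
      exact memT.mpr ⟨m, [], hnil m, by simp⟩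
    · rw [Set.mem_iUnion] at hx
      obtain ⟨j, y, hy, rfl⟩ := hx
      intro m
      rcases le_or_gt m j with h | h
      · refine memT.mpr ⟨m, [], hnil m, ?_⟩
        rw [List.append_nil]
        refine pre_congr fun i hi => ?_
        simp only [cat, pre_length]
        rw [dif_pos (by omega), List.get_eq_getElem, pre_getElem w j i (by omega)]
      · have hmj : m = j + (m - j) := by omega
        rw [hmj]
        refine memT.mpr ⟨j, pre y (m - j), hy (m - j), ?_⟩
        rw [← pre_cat (pre w j) y (m - j), pre_length]
end
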